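/- arXiv:1204.5347 — 2 statements merged into one kernel-verified Lean document; each statement's English description precedes it below -/
import Mathlib

section
/- Let Ω ∈ ℝ^{N×d} have full column rank, M ∈ ℝ^{m×d}, y ∈ ℝ^m, D = Ω†. Then x* minimizes ‖Ωx‖₀ over {x : Mx = y} if and only if γ* = Ωx* minimizes ‖γ‖₀ over {γ : MDγ = y and (I_N − ΩΩ†)γ = 0}, and in that case x* = Dγ*. -/
open Matrix

noncomputable def pinv {N d : ℕ} (Ω : Matrix (Fin N) (Fin d) ℝ) :
    Matrix (Fin d) (Fin N) ℝ := (Ωᵀ * Ω)⁻¹ * Ωᵀ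

/-- ℓ₀ "norm": number of nonzero entries. -/
noncomputable def l0 {n : ℕ} (v : Fin n → ℝ) : ℕ := (Finset.univ.filter fun i => v i ≠ 0).card

theorem stmt4 {N d m : ℕ} (Ω : Matrix (Fin N) (Fin d) ℝ) (hrank : Ω.rank = d)
    (M : Matrix (Fin m) (Fin d) ℝ) (y : Fin m → ℝ)
    (D : Matrix (Fin d) (Fin N) ℝ) (hD : D = pinv Ω)
    (hfeas : ∃ x : Fin d → ℝ, M.mulVec x = y) (xs : Fin d → ℝ) :
    ((M.mulVec xs = y ∧
        ∀ x : Fin d → ℝ, M.mulVec x = y → l0 (Ω.mulVec xs) ≤ l0 (Ω.mulVec x)) ↔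
      ((M * D).mulVec (Ω.mulVec xs) = y ∧
        (1 - Ω * pinv Ω).mulVec (Ω.mulVec xs) = 0 ∧
        ∀ γ : Fin N → ℝ, (M * D).mulVec γ = y → (1 - Ω * pinv Ω).mulVec γ = 0 →
          l0 (Ω.mulVec xs) ≤ l0 γ)) ∧
    ((M.mulVec xs = y ∧
        ∀ x : Fin d → ℝ, M.mulVec x = y → l0 (Ω.mulVec xs) ≤ l0 (Ω.mulVec x)) →
      xs = D.mulVec (Ω.mulVec xs)) := by
  -- `ΩᵀΩ` is invertible since `Ω` has full column rank
  have hunit : IsUnit (Ωᵀ * Ω) := by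
    have hr : (Ωᵀ * Ω).rank = d := by rw [Matrix.rank_transpose_mul_self]; exact hrank
    rw [← Matrix.mulVec_surjective_iff_isUnit]
    have hrange : LinearMap.range (Matrix.mulVecLin (Ωᵀ * Ω)) = ⊤ := by
      apply Submodule.eq_top_of_finrank_eq
      rw [show Module.finrank ℝ (LinearMap.range (Matrix.mulVecLin (Ωᵀ * Ω))) = (Ωᵀ * Ω).rank from rfl,
        hr, Module.finrank_pi]
      simp
    intro v
    have := hrange ▸ Submodule.mem_top (x := v) (R := ℝ)
    obtain ⟨x, hx⟩ := this
    exact ⟨x, hx⟩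
  have hPΩ : pinv Ω * Ω = 1 := by
    rw [pinv, Matrix.mul_assoc]
    exact Matrix.nonsing_inv_mul _ ((Matrix.isUnit_iff_isUnit_det _).mp hunit)
  have hDx : ∀ x : Fin d → ℝ, D.mulVec (Ω.mulVec x) = x := by
    intro x
    rw [hD, Matrix.mulVec_mulVec, hPΩ, Matrix.one_mulVec]
  have hAnn : ∀ x : Fin d → ℝ, (1 - Ω * pinv Ω).mulVec (Ω.mulVec x) = 0 := by
    intro x
    rw [Matrix.mulVec_mulVec, Matrix.sub_mul, Matrix.one_mul, Matrix.mul_assoc, hPΩ,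
      Matrix.mul_one, sub_self, Matrix.zero_mulVec]
  have hMD : ∀ x : Fin d → ℝ, (M * D).mulVec (Ω.mulVec x) = M.mulVec x := by
    intro x
    rw [← Matrix.mulVec_mulVec, hDx]
  have hγ : ∀ γ : Fin N → ℝ, (1 - Ω * pinv Ω).mulVec γ = 0 → Ω.mulVec ((pinv Ω).mulVec γ) = γ := by
    intro γ hg
    have h2 : γ - (Ω * pinv Ω).mulVec γ = 0 := by
      rw [Matrix.sub_mulVec, Matrix.one_mulVec] at hg
      exact hg
    rw [Matrix.mulVec_mulVec]
    have := sub_eq_zero.mp h2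
    exact this.symm
  constructor
  · constructor
    · rintro ⟨hfxs, hmin⟩
      refine ⟨by rw [hMD, hfxs], hAnn xs, ?_⟩
      intro γ hg1 hg2
      have hx : M.mulVec ((pinv Ω).mulVec γ) = y := by
        rw [← hg1, ← Matrix.mulVec_mulVec, hD]
      have := hmin _ hx
      rwa [hγ γ hg2] at this
    · rintro ⟨hfxs, _, hmin⟩
      have hMxs : M.mulVec xs = y := by rw [← hMD xs]; exact hfxs
      refine ⟨hMxs, ?_⟩
      intro x hx
      exact hmin (Ω.mulVec x) (by rw [hMD, hx]) (hAnn x)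
  · intro _
    exact (hDx xs).symm
end

section
/- Let Ω ∈ ℝ^{N×d} have full column rank, D = Ω†, M ∈ ℝ^{m×d}, y ∈ ℝ^m, and let P_D be a matrix whose rows span null(D). If γ* is the unique minimizer of ‖γ‖₀ subject to [MD; P_D]γ = [y; 0], then x* = Dγ* is the unique minimizer of ‖Ωx‖₀ subject to Mx = y. -/
open Matrix

theorem stmt13 {N d m p : ℕ} (Ω : Matrix (Fin N) (Fin d) ℝ) (hrank : Ω.rank = d)
    (D : Matrix (Fin d) (Fin N) ℝ) (hD : D = pinv Ω)
    (M : Matrix (Fin m) (Fin d) ℝ) (y : Fin m → ℝ)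
    (P : Matrix (Fin p) (Fin N) ℝ)
    (hspan : Submodule.span ℝ (Set.range fun i => P i) = LinearMap.ker D.mulVecLin)
    (γs : Fin N → ℝ)
    (hfeas : (M * D).mulVec γs = y ∧ P.mulVec γs = 0)
    (huniq : ∀ γ : Fin N → ℝ, (M * D).mulVec γ = y → P.mulVec γ = 0 → γ ≠ γs →
      l0 γs < l0 γ) :
    M.mulVec (D.mulVec γs) = y ∧
    ∀ x : Fin d → ℝ, M.mulVec x = y → x ≠ D.mulVec γs →
      l0 (Ω.mulVec (D.mulVec γs)) < l0 (Ω.mulVec x) := by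
  -- ΩᵀΩ is invertible
  have hrk : (Ωᵀ * Ω).rank = d := by rw [Matrix.rank_transpose_mul_self, hrank]
  have hsurj : Function.Surjective (Ωᵀ * Ω).mulVec := by
    have htop : LinearMap.range (Ωᵀ * Ω).mulVecLin = ⊤ := by
      apply Submodule.eq_top_of_finrank_eq
      rw [← Matrix.rank]
      simp [hrk]
    intro v
    obtain ⟨u, hu⟩ := LinearMap.range_eq_top.mp htop v
    exact ⟨u, by rw [← Matrix.mulVecLin_apply]; exact hu⟩
  have hunit : IsUnit (Ωᵀ * Ω) := Matrix.mulVec_surjective_iff_isUnit.mp hsurj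
  have hudet : IsUnit (Ωᵀ * Ω).det := (Matrix.isUnit_iff_isUnit_det _).mp hunit
  have hDΩ : D * Ω = 1 := by
    rw [hD, pinv, Matrix.mul_assoc, Matrix.nonsing_inv_mul _ hudet]
  -- D v = 0 → Ωᵀ v = 0
  have hker : ∀ v : Fin N → ℝ, D.mulVec v = 0 → Ωᵀ.mulVec v = 0 := by
    intro v hv
    have hmat : (Ωᵀ * Ω) * D = Ωᵀ := by
      rw [hD, pinv, ← Matrix.mul_assoc, Matrix.mul_nonsing_inv _ hudet, Matrix.one_mul]
    have : (Ωᵀ * Ω).mulVec (D.mulVec v) = Ωᵀ.mulVec v := by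
      rw [Matrix.mulVec_mulVec, hmat]
    rw [hv, Matrix.mulVec_zero] at this
    exact this.symm
  -- orthogonality: ⟨Ωu, v⟩ = 0 when D v = 0
  have horth : ∀ (u : Fin d → ℝ) (v : Fin N → ℝ), D.mulVec v = 0 →
      dotProduct (Ω.mulVec u) v = 0 := by
    intro u v hv
    rw [dotProduct_comm, dotProduct_mulVec, ← Matrix.mulVec_transpose, hker v hv,
      zero_dotProduct]
  -- γs is orthogonal to ker D
  have hγs_orth : ∀ v : Fin N → ℝ, D.mulVec v = 0 → dotProduct v γs = 0 := by
    have hsp : ∀ v ∈ Submodule.span ℝ (Set.range fun i => P i),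
        dotProduct v γs = 0 := by
      intro v hv
      induction hv using Submodule.span_induction with
      | mem w hw =>
        obtain ⟨i, rfl⟩ := hw
        have := congrFun hfeas.2 i
        simpa [Matrix.mulVec, dotProduct] using this
      | zero => simp
      | add a b _ _ ha hb => rw [add_dotProduct, ha, hb, add_zero]
      | smul r a _ ha => rw [smul_dotProduct, ha, smul_zero]
    intro v hv
    exact hsp v (by rw [hspan]; exact hv)
  -- key: Ω D γs = γs
  have hfix : Ω.mulVec (D.mulVec γs) = γs := by
    set γ' := Ω.mulVec (D.mulVec γs) with hγ'
    have hDγ' : D.mulVec γ' = D.mulVec γs := by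
      rw [hγ', Matrix.mulVec_mulVec, Matrix.mulVec_mulVec, hDΩ, Matrix.one_mul]
    have hw : D.mulVec (γs - γ') = 0 := by
      rw [Matrix.mulVec_sub, hDγ', sub_self]
    have h1 : dotProduct (γs - γ') γs = 0 := hγs_orth _ hw
    have h2 : dotProduct (γs - γ') γ' = 0 := by
      rw [dotProduct_comm]
      exact horth _ _ hw
    have h3 : dotProduct (γs - γ') (γs - γ') = 0 := by
      rw [dotProduct_sub, h1, h2, sub_zero]
    have h4 : γs - γ' = 0 := by
      by_contra h
      exact h ((dotProduct_self_eq_zero).mp h3)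
    exact (sub_eq_zero.mp h4).symm
  constructor
  · rw [Matrix.mulVec_mulVec]
    exact hfeas.1
  · intro x hx hne
    set γ := Ω.mulVec x with hγdef
    have hDγ : D.mulVec γ = x := by
      rw [hγdef, Matrix.mulVec_mulVec, hDΩ, Matrix.one_mulVec]
    have hfeas1 : (M * D).mulVec γ = y := by
      rw [← Matrix.mulVec_mulVec, hDγ, hx]
    have hfeas2 : P.mulVec γ = 0 := by
      funext i
      have hPi : D.mulVec (P i) = 0 := by
        have : (P i) ∈ LinearMap.ker D.mulVecLin := by
          rw [← hspan]
          exact Submodule.subset_span ⟨i, rfl⟩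
        exact this
      have := horth x (P i) hPi
      show dotProduct (P i) γ = 0
      rw [dotProduct_comm]
      exact this
    have hneq : γ ≠ γs := by
      intro h
      apply hne
      rw [← hDγ, h]
    have := huniq γ hfeas1 hfeas2 hneq
    rwa [hfix]
end
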